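/- There exist γ₀ > 0 and a constant C > 0 such that 1 − K̂_γ(ω) ≥ C·(|γ³ω|² ∧ 1) uniformly over γ ∈ (0,γ₀) and ω ∈ [−N−1/2, N+1/2]³. -/
import Mathlib


open scoped BigOperators
open Filter

noncomputable section

abbrev V : Type := Fin 3 → ℝ
abbrev VZ : Type := Fin 3 → ℤ

/-- The Euclidean norm on `ℝ³`. -/
def euclNorm (x : V) : ℝ := Real.sqrt (∑ i, x i ^ 2)

/-- The embedding of `ℤ³` into `ℝ³`. -/
def toV (k : VZ) : V := fun i => (k i : ℝ)

/-- `N = ⌊γ⁻⁴⌋`. -/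
def Ndef (γ : ℝ) : ℕ := ⌊γ⁻¹ ^ 4⌋₊

/-- `ε = 2/(2N+1)`. -/
def eps (γ : ℝ) : ℝ := 2 / (2 * (Ndef γ : ℝ) + 1)

/-- `𝔢 = ε/γ`. -/
def frke (γ : ℝ) : ℝ := eps γ / γ

/-- `κ_{γ,3} = ε/γ⁴`. -/
def kappa3 (γ : ℝ) : ℝ := eps γ / γ ^ 4

/-- `κ_{γ,1}`, defined by `κ_{γ,1}⁻¹ = ∑_{k ∈ ℤ³} γ³ 𝔎(γk)`. -/
def kappa1 (K : V → ℝ) (γ : ℝ) : ℝ :=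
  (∑ᶠ (k : VZ), γ ^ 3 * K (fun i => γ * (k i : ℝ)))⁻¹

/-- The discrete Fourier transform `K̂_γ` of the Kac kernel, extended to all `ω ∈ ℝ³`:
`K̂_γ(ω) = κ_{γ,1} ∑_{k ∈ ℤ³} γ³ 𝔎(γk) cos(π γ³ ω·(γk))`. -/
def Khat (K : V → ℝ) (γ : ℝ) (ω : V) : ℝ :=
  kappa1 K γ *
    ∑ᶠ (k : VZ), γ ^ 3 * K (fun i => γ * (k i : ℝ)) *
      Real.cos (Real.pi * γ ^ 3 * ∑ i, ω i * (γ * (k i : ℝ)))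

/-- The standing assumptions on the Kac interaction kernel `𝔎 : ℝ³ → [0,1]`: smooth,
compactly supported in `B(0, r⋆)`, rotation invariant, `𝔎(0) = 0`, `∫ 𝔎 = 1` and
`∫ 𝔎(x)|x|² dx = 6`. -/
structure KacKernel (rstar : ℝ) (K : V → ℝ) : Prop where
  smooth : ∀ n : ℕ, ContDiff ℝ n K
  nonneg : ∀ x, 0 ≤ K x
  le_one : ∀ x, K x ≤ 1
  support_ball : ∀ x, rstar ≤ euclNorm x → K x = 0
  rot_inv : ∀ x y, euclNorm x = euclNorm y → K x = K y
  zero_at_zero : K 0 = 0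
  integral_one : (∫ x : V, K x) = 1
  integral_sq : (∫ x : V, K x * euclNorm x ^ 2) = 6

/-- The cube `{ω ∈ ℤ³ : |ω|_∞ ≤ N}`. -/
def ibox (N : ℕ) : Finset VZ := Fintype.piFinset fun _ => Finset.Icc (-(N : ℤ)) (N : ℤ)

/-- The punctured cube `{ω ∈ ℤ³ : 0 < |ω|_∞ ≤ N}`. -/
def iboxS (N : ℕ) : Finset VZ := (ibox N).erase 0


lemma pair_ineq (a b : ℝ) :
    1 - Real.cos (b - a) ≤ 2 * (1 - Real.cos a) + 2 * (1 - Real.cos b) := by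
  have h1 := Real.sin_sq_add_cos_sq a
  have h2 := Real.sin_sq_add_cos_sq b
  have h3 := Real.cos_sub b a
  nlinarith [sq_nonneg (Real.sin a + Real.sin b), sq_nonneg (Real.cos a + Real.cos b - 2)]

lemma quad_lower {t : ℝ} (h : |t| ≤ 1) : 1/5 * t^2 ≤ 1 - Real.cos t := by
  have hπ : (3.14 : ℝ) < Real.pi := by linarith [Real.pi_gt_d6]
  have h2 := Real.cos_le_one_sub_mul_cos_sq (x := t) (by linarith)
  have hπ2 : (9 : ℝ) < Real.pi ^ 2 := by nlinarith
  have hπ3 : Real.pi ^ 2 < 10 := by nlinarith [Real.pi_lt_d2]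
  have : 1/5 * t^2 ≤ 2 / Real.pi ^ 2 * t ^ 2 := by
    apply mul_le_mul_of_nonneg_right _ (sq_nonneg t)
    rw [le_div_iff₀ (by positivity)]
    nlinarith
  linarith

lemma const_lower {t : ℝ} (h1 : 1 ≤ t) (h2 : t ≤ 3.3) : (1/5 : ℝ) ≤ 1 - Real.cos t := by
  have hπ : (3.14 : ℝ) < Real.pi := by linarith [Real.pi_gt_d6]
  rcases le_or_gt t Real.pi with h | h
  · have habs : |t| ≤ Real.pi := by rw [abs_of_nonneg (by linarith)]; exact h
    have h2 := Real.cos_le_one_sub_mul_cos_sq habs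
    have hπ3 : Real.pi ^ 2 < 10 := by nlinarith [Real.pi_lt_d2]
    have ht2 : (1:ℝ) ≤ t ^ 2 := by nlinarith
    have : (1/5 : ℝ) ≤ 2 / Real.pi ^ 2 * t ^ 2 := by
      have h5 : (1/5 : ℝ) ≤ 2 / Real.pi ^ 2 := by
        rw [le_div_iff₀ (by positivity)]; nlinarith
      nlinarith
    linarith
  · have hc : Real.cos t ≤ 0 :=
      Real.cos_nonpos_of_pi_div_two_le_of_le (by linarith) (by linarith)
    linarith


def kbox (c : VZ) (n : Fin 3 → ℕ) : Finset VZ :=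
  Fintype.piFinset fun i => Finset.Icc (c i) (c i + (n i : ℤ) - 1)

lemma card_kbox (c : VZ) (n : Fin 3 → ℕ) : (kbox c n).card = ∏ i, n i := by
  rw [kbox, Fintype.card_piFinset]
  refine Finset.prod_congr rfl fun i _ => ?_
  rw [Int.card_Icc]
  omega

lemma kbox_sum_pair (c : VZ) (M : ℕ) (θ : V) (j : Fin 3) (m : ℕ) (hm : m ≤ M) :
    ((M^2 * (M - m) : ℕ) : ℝ) * (1 - Real.cos (m * θ j))
      ≤ 4 * ∑ k ∈ kbox c (fun _ => M), (1 - Real.cos (∑ i, θ i * (k i : ℝ))) := by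
  classical
  set f : VZ → ℝ := fun k => 1 - Real.cos (∑ i, θ i * (k i : ℝ)) with hf
  have hf0 : ∀ k, 0 ≤ f k := fun k => by
    simp only [hf, sub_nonneg]; exact Real.cos_le_one _
  set n' : Fin 3 → ℕ := fun i => if i = j then M - m else M with hn'
  set B := kbox c (fun _ => M) with hB
  set B' := kbox c n' with hB'
  set d : VZ := fun i => if i = j then (m : ℤ) else 0 with hd
  have hsub : B' ⊆ B := by
    apply Fintype.piFinset_subset
    intro i
    show Finset.Icc (c i) (c i + (n' i : ℤ) - 1) ⊆ Finset.Icc (c i) (c i + (M : ℤ) - 1)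
    apply Finset.Icc_subset_Icc le_rfl
    have : n' i ≤ M := by simp only [hn']; split <;> omega
    omega
  have hshift : ∀ k ∈ B', k + d ∈ B := by
    intro k hk
    rw [hB', kbox, Fintype.mem_piFinset] at hk
    rw [hB, kbox, Fintype.mem_piFinset]
    intro i
    have := hk i
    simp only [Finset.mem_Icc] at this ⊢
    simp only [Pi.add_apply, hd]
    split <;> rename_i hij
    · subst hij; simp only [hn', if_pos rfl] at this; omega
    · simp only [hn', if_neg hij] at this; omega
  have hdiff : ∀ k : VZ, (∑ i, θ i * (((k + d) i : ℤ) : ℝ)) - (∑ i, θ i * (k i : ℝ))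
      = (m : ℝ) * θ j := by
    intro k
    rw [← Finset.sum_sub_distrib]
    have : ∀ i, θ i * (((k + d) i : ℤ) : ℝ) - θ i * (k i : ℝ)
        = if i = j then θ j * m else 0 := by
      intro i
      simp only [Pi.add_apply, hd]
      split <;> rename_i hij
      · subst hij; push_cast; ring
      · push_cast; ring
    rw [Finset.sum_congr rfl fun i _ => this i, Finset.sum_ite_eq' Finset.univ j fun _ => θ j * m]
    simp [mul_comm]
  -- pointwise inequality summed over B'
  have hpt : ∀ k ∈ B', 1 - Real.cos ((m : ℝ) * θ j) ≤ 2 * f k + 2 * f (k + d) := by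
    intro k _
    have := pair_ineq (∑ i, θ i * (k i : ℝ)) (∑ i, θ i * (((k + d) i : ℤ) : ℝ))
    rw [show (∑ i, θ i * (((k + d) i : ℤ) : ℝ)) - (∑ i, θ i * (k i : ℝ)) = (m:ℝ) * θ j
      from hdiff k] at this
    simpa [hf] using this
  have hsum1 : (B'.card : ℝ) * (1 - Real.cos ((m : ℝ) * θ j))
      ≤ 2 * ∑ k ∈ B', f k + 2 * ∑ k ∈ B', f (k + d) := by
    have := Finset.sum_le_sum hpt
    rw [Finset.sum_const, nsmul_eq_mul] at this
    rw [Finset.sum_add_distrib] at this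
    · calc (B'.card : ℝ) * (1 - Real.cos ((m:ℝ) * θ j)) ≤ _ := this
        _ = 2 * ∑ k ∈ B', f k + 2 * ∑ k ∈ B', f (k + d) := by
            rw [← Finset.mul_sum, ← Finset.mul_sum]
  have himg : ∑ k ∈ B', f (k + d) ≤ ∑ k ∈ B, f k := by
    rw [show (∑ k ∈ B', f (k + d)) = ∑ k ∈ B'.image (· + d), f k from
      (Finset.sum_image (fun x _ y _ h => by
        simpa using congrArg (· - d) h)).symm]
    apply Finset.sum_le_sum_of_subset_of_nonneg
    · intro x hx
      rw [Finset.mem_image] at hx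
      obtain ⟨k, hk, rfl⟩ := hx
      exact hshift k hk
    · intro k _ _; exact hf0 k
  have hsub2 : ∑ k ∈ B', f k ≤ ∑ k ∈ B, f k :=
    Finset.sum_le_sum_of_subset_of_nonneg hsub fun k _ _ => hf0 k
  have hcard : B'.card = M^2 * (M - m) := by
    rw [hB', card_kbox, ← Finset.mul_prod_erase Finset.univ n' (Finset.mem_univ j)]
    rw [Finset.prod_congr rfl (fun i hi => show n' i = M by
      simp [hn', (Finset.mem_erase.1 hi).1]), Finset.prod_const]
    have hce : (Finset.univ.erase j).card = 2 := by
      rw [Finset.card_erase_of_mem (Finset.mem_univ j)]; simp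
    rw [hce]
    simp only [hn', if_pos rfl]
    ring
  rw [← hcard]
  calc ((B'.card : ℕ) : ℝ) * (1 - Real.cos ((m:ℝ) * θ j))
      ≤ 2 * ∑ k ∈ B', f k + 2 * ∑ k ∈ B', f (k + d) := hsum1
    _ ≤ 4 * ∑ k ∈ B, f k := by linarith
lemma abs_coord_le_euclNorm (x : V) (i : Fin 3) : |x i| ≤ euclNorm x := by
  rw [euclNorm, ← Real.sqrt_sq_eq_abs]
  exact Real.sqrt_le_sqrt (Finset.single_le_sum (fun j _ => sq_nonneg (x j)) (Finset.mem_univ i))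

set_option maxHeartbeats 1600000 in
/-- Quantitative lower bound `1 − K̂_γ(ω) ≥ C(|γ³ω|² ∧ 1)` on
`[−N−1/2, N+1/2]³`. -/
theorem one_sub_Khat_lower_bound (rstar : ℝ) (hrstar : 0 < rstar)
    (K : V → ℝ) (hK : KacKernel rstar K) :
    ∃ γ₀ > (0 : ℝ), ∃ C > (0 : ℝ),
      ∀ γ ∈ Set.Ioo (0 : ℝ) γ₀, ∀ ω : V, (∀ i, |ω i| ≤ (Ndef γ : ℝ) + 1 / 2) →
        C * min ((γ ^ 3 * euclNorm ω) ^ 2) 1 ≤ 1 - Khat K γ ω := by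
  classical
  -- a point where K is positive
  obtain ⟨x₀, hx₀⟩ : ∃ x : V, 0 < K x := by
    by_contra h
    push_neg at h
    have hK0 : K = fun _ => 0 := funext fun x => le_antisymm (h x) (hK.nonneg x)
    have h1 := hK.integral_one
    rw [hK0] at h1
    simp at h1
  set mK := K x₀ with hmKdef
  -- continuity: K ≥ mK/2 on a small cube around x₀
  obtain ⟨δ, hδpos, hδ⟩ := Metric.continuous_iff.mp (hK.smooth 0).continuous x₀ (mK/2)
    (by positivity)
  set δ' : ℝ := min (δ/2) 1 with hδ'def
  have hδ'pos : 0 < δ' := lt_min (by linarith) one_pos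
  have hδ'le1 : δ' ≤ 1 := min_le_right _ _
  have hδ'δ : δ' < δ := lt_of_le_of_lt (min_le_left _ _) (by linarith)
  have hKge : ∀ x : V, (∀ i, |x i - x₀ i| ≤ δ') → mK/2 ≤ K x := by
    intro x hx
    have hdist : dist x x₀ < δ := by
      rw [dist_pi_lt_iff hδpos]
      intro i
      rw [Real.dist_eq]
      exact lt_of_le_of_lt (hx i) hδ'δ
    have h2 := hδ x hdist
    rw [Real.dist_eq] at h2
    have h3 := abs_lt.1 h2
    linarith [h3.1]
  set ρ : ℝ := rstar + (|x₀ 0| + |x₀ 1| + |x₀ 2|) + 1 with hρdef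
  have hρpos : 0 < ρ := by positivity
  have hρr : rstar ≤ ρ := by
    have := abs_nonneg (x₀ 0); have := abs_nonneg (x₀ 1); have := abs_nonneg (x₀ 2)
    linarith
  set A : ℝ := (2*ρ+3)^3 with hAdef
  have hApos : 0 < A := by positivity
  clear_value mK δ' ρ A
  refine ⟨min (δ'/8) (1/2), lt_min (by linarith) (by norm_num),
    mK * δ'^5 / (245760 * A), by positivity, ?_⟩
  rintro γ ⟨hγ0, hγ1⟩ ω hω
  set C : ℝ := mK * δ'^5 / (245760 * A) with hCdef
  have hCpos : 0 < C := by positivity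
  clear_value C
  have hγδ : γ < δ'/8 := lt_of_lt_of_le hγ1 (min_le_left _ _)
  have hγhalf : γ < 1/2 := lt_of_lt_of_le hγ1 (min_le_right _ _)
  have hγ1le : γ ≤ 1 := by linarith
  -- basic quantities
  set θ : V := fun i => Real.pi * γ^4 * ω i with hθdef
  clear_value θ
  set M : ℕ := ⌊δ'/γ⌋₊ with hMdef
  set cc : VZ := fun i => ⌈(x₀ i - δ')/γ⌉ with hccdef
  set R : ℤ := ⌈ρ/γ⌉ with hRdef
  set T : Finset VZ := Fintype.piFinset fun _ => Finset.Icc (-R) R with hTdef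
  have hd8 : 8 < δ'/γ := (lt_div_iff₀ hγ0).2 (by linarith)
  have hM8 : 8 ≤ M := Nat.le_floor (by push_cast; linarith)
  have hu8 : (8:ℝ) ≤ (M:ℝ) := by exact_mod_cast Nat.cast_le.2 hM8
  have hupos : (0:ℝ) < (M:ℝ) := by linarith
  have hMle : (M:ℝ) ≤ δ'/γ := Nat.floor_le (by positivity)
  have hγM : γ * (M:ℝ) ≤ δ' := by
    rw [mul_comm]
    exact (le_div_iff₀ hγ0).1 hMle
  have hMge : δ'/(2*γ) ≤ (M:ℝ) := by
    have h1 : δ'/γ < (M:ℝ) + 1 := Nat.lt_floor_add_one _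
    have h2 : δ'/(2*γ) = (δ'/γ)/2 := by ring
    linarith
  have hγu : δ'/2 ≤ γ * (M:ℝ) := by
    have h1 := mul_le_mul_of_nonneg_left hMge hγ0.le
    calc δ'/2 = γ * (δ'/(2*γ)) := by field_simp
      _ ≤ γ * (M:ℝ) := h1
  clear_value M
  -- bound on the phases
  have hθbound : ∀ i, |θ i| ≤ 3.3 := by
    intro i
    have hπ : Real.pi < 3.15 := by linarith [Real.pi_lt_d2]
    have hπ0 := Real.pi_pos
    have hN : (Ndef γ : ℝ) ≤ γ⁻¹^4 := Nat.floor_le (by positivity)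
    have hγ4 : γ^4 * γ⁻¹^4 = 1 := by
      field_simp
    have hγ2 : γ^2 ≤ 1/4 := by nlinarith
    have hγ416 : γ^4 ≤ 1/16 := by nlinarith [sq_nonneg γ, hγ2]
    have h1 : |θ i| = Real.pi * γ^4 * |ω i| := by
      simp only [hθdef]
      rw [abs_mul, abs_of_nonneg (by positivity : (0:ℝ) ≤ Real.pi * γ^4)]
    rw [h1]
    have h2 : |ω i| ≤ γ⁻¹^4 + 1/2 := le_trans (hω i) (by linarith)
    have h3 : Real.pi * γ^4 * |ω i| ≤ Real.pi * γ^4 * (γ⁻¹^4 + 1/2) := by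
      apply mul_le_mul_of_nonneg_left h2 (by positivity)
    have h4 : Real.pi * γ^4 * (γ⁻¹^4 + 1/2) = Real.pi * (γ^4 * γ⁻¹^4) + Real.pi * γ^4 / 2 := by
      ring
    rw [hγ4] at h4
    have h5 : Real.pi * γ^4 ≤ 3.15 * (1/16) :=
      mul_le_mul hπ.le hγ416 (by positivity) (by norm_num)
    rw [h4] at h3
    linarith
  -- the box B
  set B : Finset VZ := kbox cc (fun _ => M) with hBdef
  clear_value B
  have hBmem : ∀ k ∈ B, ∀ i, |γ * (k i : ℝ) - x₀ i| ≤ δ' := by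
    intro k hk i
    rw [hBdef, kbox, Fintype.mem_piFinset] at hk
    have h1 := Finset.mem_Icc.1 (hk i)
    have hlo : ((cc i : ℤ) : ℝ) ≤ (k i : ℝ) := by exact_mod_cast h1.1
    have hhi : (k i : ℝ) ≤ ((cc i : ℤ) : ℝ) + (M:ℝ) - 1 := by
      have h6 : ((k i : ℤ) : ℝ) ≤ ((cc i + (M:ℤ) - 1 : ℤ) : ℝ) := by exact_mod_cast h1.2
      push_cast at h6
      linarith
    have hceil1 : (x₀ i - δ')/γ ≤ ((cc i : ℤ) : ℝ) := Int.le_ceil _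
    have hceil2 : ((cc i : ℤ) : ℝ) < (x₀ i - δ')/γ + 1 := Int.ceil_lt_add_one _
    have hlo2 : x₀ i - δ' ≤ γ * (k i : ℝ) := by
      calc x₀ i - δ' = γ * ((x₀ i - δ')/γ) := by field_simp
        _ ≤ γ * (k i : ℝ) := mul_le_mul_of_nonneg_left (le_trans hceil1 hlo) hγ0.le
    have hhi2 : γ * (k i : ℝ) ≤ x₀ i := by
      have h7 : γ * (k i : ℝ) ≤ γ * (((cc i : ℤ) : ℝ) + (M:ℝ) - 1) :=
        mul_le_mul_of_nonneg_left hhi hγ0.le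
      have h5 : γ * (((cc i : ℤ) : ℝ) + (M:ℝ) - 1) < γ * ((x₀ i - δ')/γ + (M:ℝ)) := by
        apply mul_lt_mul_of_pos_left _ hγ0
        linarith
      have h6 : γ * ((x₀ i - δ')/γ + (M:ℝ)) = x₀ i - δ' + γ * (M:ℝ) := by field_simp
      linarith
    rw [abs_le]
    constructor <;> linarith
  have hBK : ∀ k ∈ B, mK/2 ≤ K (fun i => γ * (k i : ℝ)) := by
    intro k hk
    exact hKge _ fun i => hBmem k hk i
  -- membership in T
  have hmemT : ∀ k : VZ, (∀ i, |γ * (k i : ℝ)| ≤ ρ) → k ∈ T := by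
    intro k hk
    rw [hTdef, Fintype.mem_piFinset]
    intro i
    rw [Finset.mem_Icc, ← abs_le]
    have h1 : γ * |(k i : ℝ)| ≤ ρ := by
      have := hk i
      rwa [abs_mul, abs_of_pos hγ0] at this
    have h2 : |(k i : ℝ)| ≤ ρ/γ := (le_div_iff₀' hγ0).2 h1
    have h3 : |(k i : ℝ)| ≤ (R : ℝ) := le_trans h2 (Int.le_ceil _)
    have : ((|k i| : ℤ) : ℝ) ≤ (R : ℝ) := by rwa [Int.cast_abs]
    exact_mod_cast this
  have hBT : B ⊆ T := by
    intro k hk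
    apply hmemT
    intro i
    have h1 := hBmem k hk i
    have h2 : |x₀ i| ≤ |x₀ 0| + |x₀ 1| + |x₀ 2| := by
      have h3 : |x₀ i| ≤ ∑ j, |x₀ j| :=
        Finset.single_le_sum (fun j _ => abs_nonneg (x₀ j)) (Finset.mem_univ i)
      rwa [Fin.sum_univ_three] at h3
    have h4 : |γ * (k i : ℝ)| ≤ |γ * (k i : ℝ) - x₀ i| + |x₀ i| := by
      have h5 := abs_add_le (γ * (k i : ℝ) - x₀ i) (x₀ i)
      simpa using h5
    rw [hρdef]
    linarith
  -- support of the summands is inside T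
  have hsuppK : ∀ k : VZ, K (fun i => γ * (k i : ℝ)) ≠ 0 → k ∈ T := by
    intro k hk
    apply hmemT
    intro i
    have h1 : euclNorm (fun i => γ * (k i : ℝ)) < rstar := by
      by_contra h
      push_neg at h
      exact hk (hK.support_ball _ h)
    have h2 := abs_coord_le_euclNorm (fun i => γ * (k i : ℝ)) i
    linarith
  have hsuppa : Function.support (fun k : VZ => γ^3 * K (fun i => γ * (k i : ℝ))) ⊆ ↑T := by
    intro k hk
    simp only [Function.mem_support] at hk
    have : K (fun i => γ * (k i : ℝ)) ≠ 0 := fun h => hk (by rw [h, mul_zero])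
    exact hsuppK k this
  -- S and its bounds
  set S : ℝ := ∑ k ∈ T, γ^3 * K (fun i => γ * (k i : ℝ)) with hSdef
  have hkap : kappa1 K γ = S⁻¹ := by
    rw [kappa1, finsum_eq_sum_of_support_subset _ hsuppa]
  have hanonneg : ∀ k : VZ, 0 ≤ γ^3 * K (fun i => γ * (k i : ℝ)) := by
    intro k
    have := hK.nonneg (fun i => γ * (k i : ℝ))
    positivity
  have hcardB : B.card = M^3 := by
    rw [hBdef, card_kbox]
    simp [Finset.prod_const]
  have hmKpos : 0 < mK := hx₀
  have hS_lb : (M:ℝ)^3 * (γ^3 * (mK/2)) ≤ S := by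
    have h1 : ∀ k ∈ B, γ^3 * (mK/2) ≤ γ^3 * K (fun i => γ * (k i : ℝ)) := by
      intro k hk
      exact mul_le_mul_of_nonneg_left (hBK k hk) (by positivity)
    have h2 := Finset.card_nsmul_le_sum B _ _ h1
    rw [hcardB] at h2
    have h3 : ∑ k ∈ B, γ^3 * K (fun i => γ * (k i : ℝ)) ≤ S := by
      rw [hSdef]
      exact Finset.sum_le_sum_of_subset_of_nonneg hBT fun k _ _ => hanonneg k
    have h4 : ((M^3 : ℕ) : ℝ) = (M:ℝ)^3 := by push_cast; ring
    rw [nsmul_eq_mul, h4] at h2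
    linarith
  have hSpos : 0 < S :=
    lt_of_lt_of_le (by positivity) hS_lb
  have hS_ub : S ≤ A := by
    have hTcard : (T.card : ℝ) * γ^3 ≤ A := by
      have h1 : T.card = ((2*R+1).toNat)^3 := by
        rw [hTdef, Fintype.card_piFinset]
        simp [Int.card_Icc]
        congr 1
        omega
      have hR0 : (0:ℤ) ≤ 2*R+1 := by
        have : (0:ℝ) < ρ/γ := by positivity
        have : (0:ℤ) ≤ R := by
          rw [hRdef]
          exact_mod_cast Int.ceil_nonneg (le_of_lt this)
        omega
      have h2 : (((2*R+1).toNat : ℤ) : ℝ) = 2*(R:ℝ)+1 := by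
        rw [Int.toNat_of_nonneg hR0]; push_cast; ring
      have h3 : (R:ℝ) < ρ/γ + 1 := Int.ceil_lt_add_one _
      have h4 : ((2*R+1).toNat : ℝ) * γ ≤ 2*ρ+3 := by
        have h5 : ((2*R+1).toNat : ℝ) = 2*(R:ℝ)+1 := by exact_mod_cast h2
        rw [h5]
        have h6 : (2*(R:ℝ)+1) * γ < (2*(ρ/γ+1)+1)*γ := by
          apply mul_lt_mul_of_pos_right _ hγ0
          linarith
        have h7 : (2*(ρ/γ+1)+1)*γ = 2*ρ + 3*γ := by field_simp; ring
        linarith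
      have h8 : (T.card : ℝ) * γ^3 = (((2*R+1).toNat : ℝ) * γ)^3 := by
        rw [h1]; push_cast; ring
      rw [h8, hAdef]
      apply pow_le_pow_left₀ (by positivity) h4
    have h9 : S ≤ (T.card : ℝ) * γ^3 := by
      rw [hSdef]
      calc ∑ k ∈ T, γ^3 * K (fun i => γ * (k i : ℝ))
          ≤ ∑ k ∈ T, γ^3 * 1 := Finset.sum_le_sum fun k _ =>
            mul_le_mul_of_nonneg_left (hK.le_one _) (by positivity)
        _ = (T.card : ℝ) * γ^3 := by rw [Finset.sum_const, nsmul_eq_mul]; ring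
    linarith
  have hSinv : A⁻¹ ≤ S⁻¹ := by
    apply inv_anti₀ hSpos hS_ub
  clear_value S
  -- rewrite 1 - Khat
  have hArg : ∀ k : VZ, Real.pi * γ^3 * ∑ i, ω i * (γ * (k i : ℝ)) = ∑ i, θ i * (k i : ℝ) := by
    intro k
    rw [Finset.mul_sum]
    exact Finset.sum_congr rfl fun i _ => by simp only [hθdef]; ring
  set F : VZ → ℝ := fun k => γ^3 * K (fun i => γ * (k i : ℝ)) *
      (1 - Real.cos (∑ i, θ i * (k i : ℝ))) with hFdef
  have hFnonneg : ∀ k, 0 ≤ F k := by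
    intro k
    apply mul_nonneg (hanonneg k)
    simp only [sub_nonneg]
    exact Real.cos_le_one _
  have h1K : 1 - Khat K γ ω = S⁻¹ * ∑ k ∈ T, F k := by
    have hsupp2 : Function.support (fun k : VZ => γ ^ 3 * K (fun i => γ * (k i : ℝ)) *
        Real.cos (Real.pi * γ ^ 3 * ∑ i, ω i * (γ * (k i : ℝ)))) ⊆ ↑T := by
      intro k hk
      simp only [Function.mem_support] at hk
      apply hsuppa
      simp only [Function.mem_support]
      intro h
      exact hk (by rw [h, zero_mul])
    rw [Khat, hkap, finsum_eq_sum_of_support_subset _ hsupp2]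
    have hsplit : ∑ k ∈ T, F k = S - ∑ k ∈ T, γ ^ 3 * K (fun i => γ * (k i : ℝ)) *
        Real.cos (Real.pi * γ ^ 3 * ∑ i, ω i * (γ * (k i : ℝ))) := by
      rw [hSdef, ← Finset.sum_sub_distrib]
      apply Finset.sum_congr rfl
      intro k _
      rw [hFdef, hArg k]
      ring
    rw [hsplit]
    field_simp [hSpos.ne']
  have hTF0 : 0 ≤ ∑ k ∈ T, F k := Finset.sum_nonneg fun k _ => hFnonneg k
  -- choose the coordinate with largest |ω i|
  obtain ⟨j, -, hj⟩ := Finset.exists_max_image Finset.univ (fun i => |ω i|)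
    ⟨0, Finset.mem_univ 0⟩
  -- the key lower bound for any shift m
  have hmain : ∀ m : ℕ, m ≤ M →
      γ^3 * (mK/2) / 4 * ((M:ℝ)^2 * ((M - m : ℕ) : ℝ)) * (1 - Real.cos ((m:ℝ) * θ j))
        ≤ ∑ k ∈ T, F k := by
    intro m hmM
    have hbox := kbox_sum_pair cc M θ j m hmM
    have hstep1 : ∀ k ∈ B, γ^3*(mK/2) * (1 - Real.cos (∑ i, θ i * (k i:ℝ))) ≤ F k := by
      intro k hk
      rw [hFdef]
      apply mul_le_mul_of_nonneg_right
        (mul_le_mul_of_nonneg_left (hBK k hk) (by positivity))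
      simp only [sub_nonneg]
      exact Real.cos_le_one _
    have h2 : γ^3*(mK/2) * ∑ k ∈ B, (1 - Real.cos (∑ i, θ i * (k i:ℝ))) ≤ ∑ k ∈ B, F k := by
      rw [Finset.mul_sum]
      exact Finset.sum_le_sum hstep1
    have h3 : ∑ k ∈ B, F k ≤ ∑ k ∈ T, F k :=
      Finset.sum_le_sum_of_subset_of_nonneg hBT fun k _ _ => hFnonneg k
    have hcast : ((M^2*(M-m):ℕ):ℝ) = (M:ℝ)^2 * ((M-m:ℕ):ℝ) := by push_cast; ring
    calc γ^3*(mK/2)/4 * ((M:ℝ)^2*((M-m:ℕ):ℝ)) * (1 - Real.cos ((m:ℝ)*θ j))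
        = γ^3*(mK/2)/4 * (((M^2*(M-m):ℕ):ℝ) * (1 - Real.cos ((m:ℝ)*θ j))) := by
          rw [hcast]; ring
      _ ≤ γ^3*(mK/2)/4 * (4*∑ k ∈ kbox cc (fun _ => M), (1 - Real.cos (∑ i, θ i * (k i:ℝ)))) :=
          mul_le_mul_of_nonneg_left hbox (by positivity)
      _ = γ^3*(mK/2) * ∑ k ∈ B, (1 - Real.cos (∑ i, θ i * (k i:ℝ))) := by
          rw [← hBdef]; ring
      _ ≤ ∑ k ∈ B, F k := h2
      _ ≤ ∑ k ∈ T, F k := h3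
  -- norm facts
  have hω2 : ∀ i, ω i^2 ≤ ω j^2 := by
    intro i
    calc ω i^2 = |ω i|^2 := (sq_abs _).symm
      _ ≤ |ω j|^2 := pow_le_pow_left₀ (abs_nonneg _) (hj i (Finset.mem_univ i)) 2
      _ = ω j^2 := sq_abs _
  have hnormsq : (γ^3 * euclNorm ω)^2 = γ^6 * ∑ i, ω i^2 := by
    rw [euclNorm, mul_pow, Real.sq_sqrt (Finset.sum_nonneg fun i _ => sq_nonneg _)]
    ring
  have hsum3 : ∑ i, ω i^2 ≤ 3 * ω j^2 := by
    rw [Fin.sum_univ_three]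
    linarith [hω2 0, hω2 1, hω2 2]
  have hθj : (θ j)^2 = Real.pi^2 * γ^8 * (ω j)^2 := by simp only [hθdef]; ring
  have hπ2 : (9:ℝ) ≤ Real.pi^2 := by nlinarith [Real.pi_gt_d6]
  rcases le_or_gt (|θ j|) (2/(M:ℝ)) with hcase | hcase
  · -- small phase: quadratic bound with shift m = M/2
    have hmM : M/2 ≤ M := Nat.div_le_self M 2
    have hm_le : ((M/2:ℕ):ℝ) ≤ (M:ℝ)/2 := by
      have h : (2*(M/2):ℕ) ≤ M := by omega
      have h2 : ((2*(M/2):ℕ):ℝ) ≤ (M:ℝ) := by exact_mod_cast Nat.cast_le.2 h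
      push_cast at h2
      linarith
    have hm_ge : (M:ℝ)/4 ≤ ((M/2:ℕ):ℝ) := by
      have h : M ≤ 4*(M/2) := by omega
      have h2 : ((M:ℕ):ℝ) ≤ ((4*(M/2):ℕ):ℝ) := by exact_mod_cast Nat.cast_le.2 h
      push_cast at h2
      linarith
    have hsub_ge : (M:ℝ)/4 ≤ ((M - M/2 : ℕ):ℝ) := by
      have h : M ≤ 4*(M - M/2) := by omega
      have h2 : ((M:ℕ):ℝ) ≤ ((4*(M - M/2):ℕ):ℝ) := by exact_mod_cast Nat.cast_le.2 h
      push_cast at h2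
      linarith
    have habs : |((M/2:ℕ):ℝ) * θ j| ≤ 1 := by
      rw [abs_mul, Nat.abs_cast]
      have h1 : ((M/2:ℕ):ℝ)*|θ j| ≤ ((M:ℝ)/2)*(2/(M:ℝ)) :=
        mul_le_mul hm_le hcase (abs_nonneg _) (by positivity)
      have h2 : ((M:ℝ)/2)*(2/(M:ℝ)) = 1 := by field_simp
      linarith
    have hcos := quad_lower habs
    have hkey := hmain (M/2) hmM
    have hA2 : γ^3*(mK/2)/4 * ((M:ℝ)^2*((M:ℝ)/4)) * (1/5*(((M:ℝ)/4)*|θ j|)^2)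
        ≤ γ^3*(mK/2)/4 * ((M:ℝ)^2*((M - M/2:ℕ):ℝ)) * (1 - Real.cos (((M/2:ℕ):ℝ)*θ j)) := by
      have e1 : 1/5*(((M:ℝ)/4)*|θ j|)^2 ≤ 1 - Real.cos (((M/2:ℕ):ℝ)*θ j) := by
        refine le_trans ?_ hcos
        have h4 : (((M:ℝ)/4)*|θ j|)^2 ≤ (((M/2:ℕ):ℝ)*θ j)^2 := by
          have e4 : (((M/2:ℕ):ℝ)*θ j)^2 = (((M/2:ℕ):ℝ)*|θ j|)^2 := by
            rw [mul_pow, mul_pow, sq_abs]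
          rw [e4]
          exact pow_le_pow_left₀ (by positivity)
            (mul_le_mul_of_nonneg_right hm_ge (abs_nonneg _)) 2
        linarith
      apply mul_le_mul _ e1 (by positivity) (by positivity)
      apply mul_le_mul_of_nonneg_left _ (by positivity)
      exact mul_le_mul_of_nonneg_left hsub_ge (by positivity)
    have hA1 := le_trans hA2 hkey
    have h5 : (δ'/2)^5 ≤ (γ*(M:ℝ))^5 := pow_le_pow_left₀ (by positivity) hγu 5
    have hcoef : 3*C ≤ A⁻¹*(mK*Real.pi^2*(γ*(M:ℝ))^5/2560) := by
      have e1 : 3*C = mK*δ'^5/(81920*A) := by rw [hCdef]; ring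
      have e2 : A⁻¹*(mK*Real.pi^2*(γ*(M:ℝ))^5/2560)
          = mK*Real.pi^2*(γ*(M:ℝ))^5/(2560*A) := by
        field_simp
      rw [e1, e2, div_le_div_iff₀ (by positivity) (by positivity)]
      have e3 : (δ'/2)^5 = δ'^5/32 := by ring
      rw [e3] at h5
      have h9 : (1:ℝ)*(δ'^5/32) ≤ Real.pi^2*((γ*(M:ℝ))^5) :=
        mul_le_mul (by linarith) h5 (by positivity) (by positivity)
      calc mK*δ'^5*(2560*A) = (mK*(81920*A))*((1:ℝ)*(δ'^5/32)) := by ring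
        _ ≤ (mK*(81920*A))*(Real.pi^2*((γ*(M:ℝ))^5)) :=
            mul_le_mul_of_nonneg_left h9 (by positivity)
        _ = mK*Real.pi^2*(γ*(M:ℝ))^5*(81920*A) := by ring
    calc C * min ((γ^3*euclNorm ω)^2) 1
        ≤ C * (γ^3*euclNorm ω)^2 := mul_le_mul_of_nonneg_left (min_le_left _ _) hCpos.le
      _ = C * (γ^6 * ∑ i, ω i^2) := by rw [hnormsq]
      _ ≤ C * (γ^6 * (3*ω j^2)) := mul_le_mul_of_nonneg_left
          (mul_le_mul_of_nonneg_left hsum3 (by positivity)) hCpos.le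
      _ = 3*C*(γ^6*ω j^2) := by ring
      _ ≤ A⁻¹*(mK*Real.pi^2*(γ*(M:ℝ))^5/2560)*(γ^6*ω j^2) :=
          mul_le_mul_of_nonneg_right hcoef (by positivity)
      _ = A⁻¹ * (γ^3*(mK/2)/4 * ((M:ℝ)^2*((M:ℝ)/4)) * (1/5*(((M:ℝ)/4)*|θ j|)^2)) := by
          rw [show (((M:ℝ)/4)*|θ j|)^2 = ((M:ℝ)/4)^2 * (θ j)^2 by rw [mul_pow, sq_abs]]
          rw [hθj]
          ring
      _ ≤ A⁻¹ * ∑ k ∈ T, F k := mul_le_mul_of_nonneg_left hA1 (by positivity)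
      _ ≤ S⁻¹ * ∑ k ∈ T, F k := mul_le_mul_of_nonneg_right hSinv hTF0
      _ = 1 - Khat K γ ω := h1K.symm
  · -- large phase: constant bound
    have hθjpos : 0 < |θ j| := lt_trans (by positivity) hcase
    have huθ : 2 < (M:ℝ) * |θ j| := by
      have h1 := mul_lt_mul_of_pos_left hcase hupos
      have h2 : (M:ℝ)*(2/(M:ℝ)) = 2 := by field_simp
      linarith
    set m : ℕ := if |θ j| ≤ 1 then ⌈1/|θ j|⌉₊ else 1 with hmdef
    have hm1 : 1 ≤ (m:ℝ) * |θ j| := by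
      rw [hmdef]
      split
      · have h := Nat.le_ceil (1/|θ j|)
        calc (1:ℝ) = (1/|θ j|)*|θ j| := by field_simp
          _ ≤ (⌈1/|θ j|⌉₊:ℝ)*|θ j| := mul_le_mul_of_nonneg_right h (abs_nonneg _)
      · rename_i hsp
        push_neg at hsp
        simp only [Nat.cast_one, one_mul]
        linarith
    have hm2 : (m:ℝ)*|θ j| ≤ 3.3 := by
      rw [hmdef]
      split
      · rename_i hsp
        have h := Nat.ceil_lt_add_one (le_of_lt (by positivity : (0:ℝ) < 1/|θ j|))
        have h2 : (⌈1/|θ j|⌉₊:ℝ)*|θ j| < (1/|θ j| + 1)*|θ j| :=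
          mul_lt_mul_of_pos_right h hθjpos
        have e : (1/|θ j| + 1)*|θ j| = 1 + |θ j| := by field_simp
        rw [e] at h2
        linarith
      · rename_i hsp
        push_neg at hsp
        simp only [Nat.cast_one, one_mul]
        exact hθbound j
    have hmleR : (m:ℝ) ≤ 5*(M:ℝ)/8 := by
      rw [hmdef]
      split
      · rename_i hsp
        have h := Nat.ceil_lt_add_one (le_of_lt (by positivity : (0:ℝ) < 1/|θ j|))
        have h2 : 1/|θ j| < (M:ℝ)/2 := by
          rw [div_lt_div_iff₀ hθjpos (by norm_num : (0:ℝ) < 2)]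
          linarith
        have h3 : (⌈1/|θ j|⌉₊:ℝ) < (M:ℝ)/2 + 1 := by linarith
        linarith
      · simp only [Nat.cast_one]
        linarith
    have hmM : m ≤ M := by
      have h : (m:ℝ) ≤ (M:ℝ) := by linarith
      exact_mod_cast h
    have hsub_ge : 3*(M:ℝ)/8 ≤ ((M-m:ℕ):ℝ) := by
      rw [Nat.cast_sub hmM]
      linarith
    have hcos : (1/5:ℝ) ≤ 1 - Real.cos ((m:ℝ)*θ j) := by
      have e : Real.cos ((m:ℝ)*θ j) = Real.cos ((m:ℝ)*|θ j|) := by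
        rw [← Real.cos_abs ((m:ℝ)*θ j), abs_mul, Nat.abs_cast]
      rw [e]
      exact const_lower hm1 hm2
    have hkey := hmain m hmM
    have hB2 : γ^3*(mK/2)/4*((M:ℝ)^2*(3*(M:ℝ)/8))*(1/5)
        ≤ γ^3*(mK/2)/4*((M:ℝ)^2*((M-m:ℕ):ℝ))*(1 - Real.cos ((m:ℝ)*θ j)) := by
      apply mul_le_mul _ hcos (by norm_num) (by positivity)
      apply mul_le_mul_of_nonneg_left _ (by positivity)
      exact mul_le_mul_of_nonneg_left hsub_ge (by positivity)
    have hB1 := le_trans hB2 hkey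
    have h5 : (δ'/2)^3 ≤ (γ*(M:ℝ))^3 := pow_le_pow_left₀ (by positivity) hγu 3
    have hcoefB : C ≤ A⁻¹*(γ^3*(mK/2)/4*((M:ℝ)^2*(3*(M:ℝ)/8))*(1/5)) := by
      have e2 : A⁻¹*(γ^3*(mK/2)/4*((M:ℝ)^2*(3*(M:ℝ)/8))*(1/5))
          = 3*mK*(γ*(M:ℝ))^3/(320*A) := by
        field_simp
        ring
      rw [hCdef, e2, div_le_div_iff₀ (by positivity) (by positivity)]
      have e3 : (δ'/2)^3 = δ'^3/8 := by ring
      rw [e3] at h5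
      have h6 : δ'^5 ≤ δ'^3 := pow_le_pow_of_le_one hδ'pos.le hδ'le1 (by norm_num)
      calc mK*δ'^5*(320*A)
          ≤ mK*δ'^3*(320*A) := mul_le_mul_of_nonneg_right
            (mul_le_mul_of_nonneg_left h6 hmKpos.le) (by positivity)
        _ ≤ mK*δ'^3*(92160*A) := mul_le_mul_of_nonneg_left (by linarith)
            (by positivity)
        _ = (3*mK*(245760*A))*(δ'^3/8) := by ring
        _ ≤ (3*mK*(245760*A))*((γ*(M:ℝ))^3) :=
            mul_le_mul_of_nonneg_left h5 (by positivity)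
        _ = 3*mK*(γ*(M:ℝ))^3*(245760*A) := by ring
    calc C * min ((γ^3*euclNorm ω)^2) 1
        ≤ C * 1 := mul_le_mul_of_nonneg_left (min_le_right _ _) hCpos.le
      _ = C := mul_one C
      _ ≤ A⁻¹*(γ^3*(mK/2)/4*((M:ℝ)^2*(3*(M:ℝ)/8))*(1/5)) := hcoefB
      _ ≤ A⁻¹ * ∑ k ∈ T, F k := mul_le_mul_of_nonneg_left hB1 (by positivity)
      _ ≤ S⁻¹ * ∑ k ∈ T, F k := mul_le_mul_of_nonneg_right hSinv hTF0
      _ = 1 - Khat K γ ω := h1K.symm
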